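/- Let R be a p-torsion-free commutative ring, M, N finite free R-modules of rank 2g with F: N → M, V: M → N satisfying F∘V = p and V∘F = p, and suppose that ker(F̄) and ker(V̄) are direct summands of N̄ := N/pN and M̄ := M/pM respectively, of rank g. Then F̄ induces an isomorphism N̄/ker(F̄) ≅ ker(V̄) and V̄ induces an isomorphism M̄/ker(V̄) ≅ ker(F̄); consequently one obtains a direct-summand-wise isomorphism δ: ker(F̄) ⊕ N̄/ker(F̄) ≅ M̄/ker(V̄) ⊕ ker(V̄), given by [V̄]⁻¹ ⊕ F̄. -/

import Mathlib

/-!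
Since `V ∘ F = p`, the composite `N̄ → M̄ → N̄` vanishes. Conversely, if `V m = p n` then
`p (F n - m) = F (V m) - p m = 0`, so `F n = m` because `M` is free over a `p`-torsion-free ring.
Hence `N̄ → M̄ → N̄ → M̄` is exact, `range F̄ = ker V̄` and `range V̄ = ker F̄`, and the first
isomorphism theorem gives `N̄ / ker F̄ ≅ ker V̄` and `M̄ / ker V̄ ≅ ker F̄`.
-/

namespace Submodule

variable {R M N : Type*} [CommRing R] [AddCommGroup M] [Module R M] [AddCommGroup N] [Module R N]
  {r : R} (F : N →ₗ[R] M) (V : M →ₗ[R] N)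
  (hF : Ideal.span {r} • (⊤ : Submodule R N) ≤ comap F (Ideal.span {r} • ⊤))
  (hV : Ideal.span {r} • (⊤ : Submodule R M) ≤ comap V (Ideal.span {r} • ⊤))

theorem range_mapQ_le_ker_mapQ_of_comp_eq_smul (hVF : V ∘ₗ F = r • LinearMap.id) :
    LinearMap.range (mapQ _ _ F hF) ≤ LinearMap.ker (mapQ _ _ V hV) := by
  rintro _ ⟨x, rfl⟩
  induction x using Quotient.induction_on with | _ n
  have hVFn : V (F n) = r • n := by simpa using LinearMap.congr_fun hVF n
  simp only [LinearMap.mem_ker, mapQ_apply, Quotient.mk_eq_zero, hVFn]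
  exact smul_mem_smul (Ideal.mem_span_singleton_self r) mem_top

theorem ker_mapQ_le_range_mapQ_of_comp_eq_smul (hFV : F ∘ₗ V = r • LinearMap.id)
    (hr : IsSMulRegular M r) :
    LinearMap.ker (mapQ _ _ V hV) ≤ LinearMap.range (mapQ _ _ F hF) := by
  intro x hx
  induction x using Quotient.induction_on with | _ m
  simp only [LinearMap.mem_ker, mapQ_apply, Quotient.mk_eq_zero, ideal_span_singleton_smul,
    mem_smul_pointwise_iff_exists] at hx
  obtain ⟨n, -, hn⟩ := hx
  have hFn : F n = m := hr <| show r • F n = r • m by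
    rw [← map_smul, hn]
    simpa using LinearMap.congr_fun hFV m
  exact ⟨Quotient.mk n, by rw [mapQ_apply, hFn]⟩

theorem range_mapQ_eq_ker_mapQ_of_comp_eq_smul (hFV : F ∘ₗ V = r • LinearMap.id)
    (hVF : V ∘ₗ F = r • LinearMap.id) (hr : IsSMulRegular M r) :
    LinearMap.range (mapQ _ _ F hF) = LinearMap.ker (mapQ _ _ V hV) :=
  le_antisymm (range_mapQ_le_ker_mapQ_of_comp_eq_smul F V hF hV hVF)
    (ker_mapQ_le_range_mapQ_of_comp_eq_smul F V hF hV hFV hr)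

end Submodule

namespace LinearMap

variable {R M N : Type*} [CommRing R] [AddCommGroup M] [Module R M] [AddCommGroup N] [Module R N]

noncomputable def quotKerEquivOfRangeEq (f : M →ₗ[R] N) {K : Submodule R N} (h : range f = K) :
    (M ⧸ ker f) ≃ₗ[R] K :=
  f.quotKerEquivRange.trans (LinearEquiv.ofEq _ _ h)

end LinearMap

theorem stmt6_general (p : ℕ) (R : Type*) [CommRing R]
    (hpnzd : ∀ x : R, (p : R) * x = 0 → x = 0)
    (M N : Type*) [AddCommGroup M] [Module R M] [AddCommGroup N] [Module R N]
    [Module.Free R M] [Module.Free R N]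
    (F : N →ₗ[R] M) (V : M →ₗ[R] N)
    (hFV : F ∘ₗ V = (p : R) • LinearMap.id)
    (hVF : V ∘ₗ F = (p : R) • LinearMap.id)
    (hF : (Ideal.span {(p : R)} • (⊤ : Submodule R N)) ≤
      Submodule.comap F (Ideal.span {(p : R)} • (⊤ : Submodule R M)))
    (hV : (Ideal.span {(p : R)} • (⊤ : Submodule R M)) ≤
      Submodule.comap V (Ideal.span {(p : R)} • (⊤ : Submodule R N)))
    (Fbar : (N ⧸ Ideal.span {(p : R)} • (⊤ : Submodule R N)) →ₗ[R]
      (M ⧸ Ideal.span {(p : R)} • (⊤ : Submodule R M)))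
    (Vbar : (M ⧸ Ideal.span {(p : R)} • (⊤ : Submodule R M)) →ₗ[R]
      (N ⧸ Ideal.span {(p : R)} • (⊤ : Submodule R N)))
    (hFbar : Fbar = Submodule.mapQ _ _ F hF) (hVbar : Vbar = Submodule.mapQ _ _ V hV) :
    ∃ (e₁ : ((N ⧸ Ideal.span {(p : R)} • (⊤ : Submodule R N)) ⧸ LinearMap.ker Fbar)
        ≃ₗ[R] LinearMap.ker Vbar)
      (e₂ : ((M ⧸ Ideal.span {(p : R)} • (⊤ : Submodule R M)) ⧸ LinearMap.ker Vbar)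
        ≃ₗ[R] LinearMap.ker Fbar),
      (∀ n, ((e₁ (Submodule.Quotient.mk n) :
        M ⧸ Ideal.span {(p : R)} • (⊤ : Submodule R M))) = Fbar n) ∧
      (∀ m, ((e₂ (Submodule.Quotient.mk m) :
        N ⧸ Ideal.span {(p : R)} • (⊤ : Submodule R N))) = Vbar m) ∧
      ∃ δ : (LinearMap.ker Fbar ×
          ((N ⧸ Ideal.span {(p : R)} • (⊤ : Submodule R N)) ⧸ LinearMap.ker Fbar))
        ≃ₗ[R] (((M ⧸ Ideal.span {(p : R)} • (⊤ : Submodule R M)) ⧸ LinearMap.ker Vbar)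
          × LinearMap.ker Vbar),
        ∀ x q, δ (x, q) = (e₂.symm x, e₁ q) := by
  subst hFbar hVbar
  have hM : IsSMulRegular M (p : R) :=
    Module.Flat.isSMulRegular_of_nonZeroDivisors (mem_nonZeroDivisors_iff_left.mpr hpnzd)
  have hN : IsSMulRegular N (p : R) :=
    Module.Flat.isSMulRegular_of_nonZeroDivisors (mem_nonZeroDivisors_iff_left.mpr hpnzd)
  let e₁ := LinearMap.quotKerEquivOfRangeEq _
    (Submodule.range_mapQ_eq_ker_mapQ_of_comp_eq_smul F V hF hV hFV hVF hM)
  let e₂ := LinearMap.quotKerEquivOfRangeEq _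
    (Submodule.range_mapQ_eq_ker_mapQ_of_comp_eq_smul V F hV hF hVF hFV hN)
  exact ⟨e₁, e₂, fun _ => rfl, fun _ => rfl, e₂.symm.prodCongr e₁, fun _ _ => rfl⟩

/-- The 'zip isomorphism' of a Dieudonné module: let `R` be a
`p`-torsion-free commutative ring, `M`, `N` finite free of rank `2g`, and
`F : N → M`, `V : M → N` with `F∘V = p·id`, `V∘F = p·id`.  Assume `ker F̄` and
`ker V̄` are direct summands of `N̄ = N/pN`, `M̄ = M/pM`, of rank `g` (in
particular generated by `g` elements).  Then `F̄` induces an isomorphism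
`N̄/ker F̄ ≅ ker V̄`, `V̄` induces an isomorphism `M̄/ker V̄ ≅ ker F̄`, and these
assemble into a direct-summand-wise isomorphism
`δ = [V̄]⁻¹ ⊕ F̄ : ker F̄ ⊕ N̄/ker F̄ ≅ M̄/ker V̄ ⊕ ker V̄`. -/
theorem stmt6 (p : ℕ) (hp : p.Prime) (g : ℕ) (R : Type*) [CommRing R]
    (hpnzd : ∀ x : R, (p : R) * x = 0 → x = 0)
    (M N : Type*) [AddCommGroup M] [Module R M] [AddCommGroup N] [Module R N]
    [Module.Free R M] [Module.Finite R M] [Module.Free R N] [Module.Finite R N]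
    (hrankM : Module.finrank R M = 2 * g) (hrankN : Module.finrank R N = 2 * g)
    (F : N →ₗ[R] M) (V : M →ₗ[R] N)
    (hFV : F ∘ₗ V = (p : R) • LinearMap.id)
    (hVF : V ∘ₗ F = (p : R) • LinearMap.id)
    (hF : (Ideal.span {(p : R)} • (⊤ : Submodule R N)) ≤
      Submodule.comap F (Ideal.span {(p : R)} • (⊤ : Submodule R M)))
    (hV : (Ideal.span {(p : R)} • (⊤ : Submodule R M)) ≤
      Submodule.comap V (Ideal.span {(p : R)} • (⊤ : Submodule R N)))
    (Fbar : (N ⧸ Ideal.span {(p : R)} • (⊤ : Submodule R N)) →ₗ[R]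
      (M ⧸ Ideal.span {(p : R)} • (⊤ : Submodule R M)))
    (Vbar : (M ⧸ Ideal.span {(p : R)} • (⊤ : Submodule R M)) →ₗ[R]
      (N ⧸ Ideal.span {(p : R)} • (⊤ : Submodule R N)))
    (hFbar : Fbar = Submodule.mapQ _ _ F hF) (hVbar : Vbar = Submodule.mapQ _ _ V hV)
    -- `ker F̄` is a direct summand of rank `g`:
    (hkerF : (∃ K, IsCompl (LinearMap.ker Fbar) K) ∧
      ∃ s : Fin g → (N ⧸ Ideal.span {(p : R)} • (⊤ : Submodule R N)),
        Submodule.span R (Set.range s) = LinearMap.ker Fbar)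
    -- `ker V̄` is a direct summand of rank `g`:
    (hkerV : (∃ K, IsCompl (LinearMap.ker Vbar) K) ∧
      ∃ s : Fin g → (M ⧸ Ideal.span {(p : R)} • (⊤ : Submodule R M)),
        Submodule.span R (Set.range s) = LinearMap.ker Vbar) :
    ∃ (e₁ : ((N ⧸ Ideal.span {(p : R)} • (⊤ : Submodule R N)) ⧸ LinearMap.ker Fbar)
        ≃ₗ[R] LinearMap.ker Vbar)
      (e₂ : ((M ⧸ Ideal.span {(p : R)} • (⊤ : Submodule R M)) ⧸ LinearMap.ker Vbar)
        ≃ₗ[R] LinearMap.ker Fbar),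
      (∀ n, ((e₁ (Submodule.Quotient.mk n) :
        M ⧸ Ideal.span {(p : R)} • (⊤ : Submodule R M))) = Fbar n) ∧
      (∀ m, ((e₂ (Submodule.Quotient.mk m) :
        N ⧸ Ideal.span {(p : R)} • (⊤ : Submodule R N))) = Vbar m) ∧
      ∃ δ : (LinearMap.ker Fbar ×
          ((N ⧸ Ideal.span {(p : R)} • (⊤ : Submodule R N)) ⧸ LinearMap.ker Fbar))
        ≃ₗ[R] (((M ⧸ Ideal.span {(p : R)} • (⊤ : Submodule R M)) ⧸ LinearMap.ker Vbar)
          × LinearMap.ker Vbar),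
        ∀ x q, δ (x, q) = (e₂.symm x, e₁ q) :=
  stmt6_general p R hpnzd M N F V hFV hVF hF hV Fbar Vbar hFbar hVbar
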